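/- arXiv:2205.15141 — 3 statements merged into one kernel-verified Lean document; each statement's English description precedes it below -/
import Mathlib

section
/- Let D₁ and D₂ be finite Boolean subalgebras of a finite Boolean algebra D⋆ such that any comparable pair of elements x ∈ D₁ and y ∈ D₂ has one of them equal to ⊤ or ⊥. Then for every x ∈ D₁ \ {⊤, ⊥} and every y₁, y₂ ∈ D₂ \ {⊤, ⊥}, if y₁ < y₂ then ⊥ < x ⊓ y₁ < x ⊓ y₂ and x ⊔ y₁ < x ⊔ y₂ < ⊤ in D⋆. -/
/-- A subset of a Boolean algebra that is (the carrier of) a sub-Boolean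
algebra: it contains `⊤` and `⊥` and is closed under complement, meet and
join. -/
def IsSubBoolAlg {D : Type*} [BooleanAlgebra D] (S : Set D) : Prop :=
  ⊤ ∈ S ∧ ⊥ ∈ S ∧ (∀ x ∈ S, xᶜ ∈ S) ∧
    (∀ x ∈ S, ∀ y ∈ S, x ⊓ y ∈ S) ∧ (∀ x ∈ S, ∀ y ∈ S, x ⊔ y ∈ S)

/-- The atoms of a sub-Boolean algebra with carrier `S`. -/
def atomsOf {D : Type*} [BooleanAlgebra D] (S : Set D) : Set D :=
  {x | x ∈ S ∧ ⊥ < x ∧ ∀ y ∈ S, y ≤ x → y = x ∨ y = ⊥}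

/-!
Since `y₁ < y₂` with `y₂ ≠ ⊤`, the difference `y₂ \ y₁` is a nontrivial element of `D₂`.
If `x ⊓ y₁ = x ⊓ y₂`, then `x` is disjoint from `y₂ \ y₁`, i.e. `x ≤ (y₂ \ y₁)ᶜ`; if
`x ⊔ y₁ = x ⊔ y₂`, then `y₂ \ y₁ ≤ x`. Similarly `x ⊓ y₁ = ⊥` means `x ≤ y₁ᶜ` and `x ⊔ y₂ = ⊤`
means `xᶜ ≤ y₂`. Each of these is a comparability between a nontrivial element of `D₁` and a
nontrivial element of `D₂`, which the hypothesis forbids.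
-/

section GeneralizedBooleanAlgebra

variable {α : Type*} [GeneralizedBooleanAlgebra α] {x y₁ y₂ : α}

theorem inf_lt_inf_left_of_not_disjoint_sdiff (h : y₁ ≤ y₂) (hd : ¬Disjoint x (y₂ \ y₁)) :
    x ⊓ y₁ < x ⊓ y₂ := by
  refine (inf_le_inf_left x h).lt_of_ne fun heq => hd ?_
  rw [disjoint_iff, ← inf_sdiff_assoc, ← heq, inf_sdiff_assoc, sdiff_self, inf_bot_eq]

theorem sup_lt_sup_left_of_not_sdiff_le (h : y₁ ≤ y₂) (hd : ¬y₂ \ y₁ ≤ x) :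
    x ⊔ y₁ < x ⊔ y₂ := by
  refine (sup_le_sup_left h x).lt_of_ne fun heq => hd ?_
  rw [sdiff_le_iff, sup_comm, heq]
  exact le_sup_right

end GeneralizedBooleanAlgebra

section Subalgebra

variable {D : Type*} [BooleanAlgebra D]

theorem compl_mem_diff_top_bot {S : Set D} (hC : ∀ x ∈ S, xᶜ ∈ S) {x : D}
    (hx : x ∈ S \ ({⊤, ⊥} : Set D)) : xᶜ ∈ S \ ({⊤, ⊥} : Set D) := by
  simp only [Set.mem_sdiff, Set.mem_insert_iff, Set.mem_singleton_iff, not_or] at hx ⊢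
  exact ⟨hC x hx.1, compl_eq_top.not.2 hx.2.2, compl_eq_bot.not.2 hx.2.1⟩

theorem sdiff_mem_diff_top_bot {S : Set D} (hC : ∀ x ∈ S, xᶜ ∈ S)
    (hM : ∀ x ∈ S, ∀ y ∈ S, x ⊓ y ∈ S) {y₁ y₂ : D} (hy₁ : y₁ ∈ S) (hy₂ : y₂ ∈ S)
    (hy₂T : y₂ ≠ ⊤) (hlt : y₁ < y₂) : y₂ \ y₁ ∈ S \ ({⊤, ⊥} : Set D) := by
  simp only [Set.mem_sdiff, Set.mem_insert_iff, Set.mem_singleton_iff, not_or]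
  refine ⟨sdiff_eq (x := y₂) ▸ hM y₂ hy₂ y₁ᶜ (hC y₁ hy₁), fun h => hy₂T ?_, ?_⟩
  · exact top_le_iff.1 (h ▸ sdiff_le)
  · exact sdiff_eq_bot_iff.not.2 hlt.not_ge

theorem incompRel_of_comparable_imp_trivial {S₁ S₂ : Set D}
    (hcomp : ∀ x ∈ S₁, ∀ y ∈ S₂, (x ≤ y ∨ y ≤ x) → x = ⊤ ∨ x = ⊥ ∨ y = ⊤ ∨ y = ⊥) :
    ∀ x ∈ S₁ \ ({⊤, ⊥} : Set D), ∀ y ∈ S₂ \ ({⊤, ⊥} : Set D), IncompRel (· ≤ ·) x y := by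
  intro x hx y hy
  simp only [Set.mem_sdiff, Set.mem_insert_iff, Set.mem_singleton_iff, not_or] at hx hy
  refine not_or.1 fun h => ?_
  rcases hcomp x hx.1 y hy.1 h with h | h | h | h
  exacts [hx.2.1 h, hx.2.2 h, hy.2.1 h, hy.2.2 h]

end Subalgebra

theorem stmt2_general {D : Type*} [BooleanAlgebra D]
    (S₁ S₂ : Set D) (h₁ : IsSubBoolAlg S₁) (h₂ : IsSubBoolAlg S₂)
    (hcomp : ∀ x ∈ S₁, ∀ y ∈ S₂, (x ≤ y ∨ y ≤ x) →
      x = ⊤ ∨ x = ⊥ ∨ y = ⊤ ∨ y = ⊥) :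
    ∀ x ∈ S₁ \ ({⊤, ⊥} : Set D), ∀ y₁ ∈ S₂ \ ({⊤, ⊥} : Set D),
      ∀ y₂ ∈ S₂ \ ({⊤, ⊥} : Set D), y₁ < y₂ →
        (⊥ < x ⊓ y₁ ∧ x ⊓ y₁ < x ⊓ y₂) ∧ (x ⊔ y₁ < x ⊔ y₂ ∧ x ⊔ y₂ < ⊤) := by
  obtain ⟨-, -, hC₁, -, -⟩ := h₁
  obtain ⟨-, -, hC₂, hM₂, -⟩ := h₂
  intro x hx y₁ hy₁ y₂ hy₂ hlt
  have hincomp := incompRel_of_comparable_imp_trivial hcomp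
  have hd := sdiff_mem_diff_top_bot hC₂ hM₂ hy₁.1 hy₂.1 (fun h => hy₂.2 (.inl h)) hlt
  have hx_not_disjoint {y} (hy : y ∈ S₂ \ ({⊤, ⊥} : Set D)) : ¬Disjoint x y := fun h =>
    (hincomp x hx _ (compl_mem_diff_top_bot hC₂ hy)).1 (le_compl_iff_disjoint_right.2 h)
  have hx_not_codisjoint : ¬Codisjoint x y₂ := fun h =>
    (hincomp _ (compl_mem_diff_top_bot hC₁ hx) y₂ hy₂).1 (codisjoint_iff_compl_le_right.1 h)
  refine ⟨⟨?_, ?_⟩, ?_, ?_⟩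
  · exact bot_lt_iff_ne_bot.2 fun h => hx_not_disjoint hy₁ (disjoint_iff.2 h)
  · exact inf_lt_inf_left_of_not_disjoint_sdiff hlt.le (hx_not_disjoint hd)
  · exact sup_lt_sup_left_of_not_sdiff_le hlt.le (hincomp x hx _ hd).2
  · exact lt_top_iff_ne_top.2 fun h => hx_not_codisjoint (codisjoint_iff.2 h)

theorem stmt2 {D : Type*} [BooleanAlgebra D] [Fintype D]
    (S₁ S₂ : Set D) (h₁ : IsSubBoolAlg S₁) (h₂ : IsSubBoolAlg S₂)
    (i j : ℕ) (hi : 0 < i) (hj : 0 < j)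
    (hc₁ : (atomsOf S₁).ncard = 2 ^ i) (hc₂ : (atomsOf S₂).ncard = 2 ^ j)
    (hprod : (atomsOf S₁).ncard * (atomsOf S₂).ncard
      = (atomsOf (Set.univ : Set D)).ncard)
    (hcomp : ∀ x ∈ S₁, ∀ y ∈ S₂, (x ≤ y ∨ y ≤ x) →
      x = ⊤ ∨ x = ⊥ ∨ y = ⊤ ∨ y = ⊥) :
    ∀ x ∈ S₁ \ ({⊤, ⊥} : Set D), ∀ y₁ ∈ S₂ \ ({⊤, ⊥} : Set D),
      ∀ y₂ ∈ S₂ \ ({⊤, ⊥} : Set D), y₁ < y₂ →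
        (⊥ < x ⊓ y₁ ∧ x ⊓ y₁ < x ⊓ y₂) ∧ (x ⊔ y₁ < x ⊔ y₂ ∧ x ⊔ y₂ < ⊤) :=
  stmt2_general S₁ S₂ h₁ h₂ hcomp
end

section
/- Suppose ⟨(G, Π), D, I⟩ satisfies the aass and das constraints. Then for every edge (s₁, s₂) in the graph typed with 'attack': (1) the edge is not also typed 'support'; and (2) for every statement s, if (s, s₁) and (s, s₂) are both edges typed 'support' sharing some common theme t typing both, a contradiction follows — i.e., either (s, s₂) is not an edge, or not typed 'support', or there is no common theme. -/
open Set

theorem stmt11_general {Theme Stmt D : Type*} [CompleteBooleanAlgebra D]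
    (Rel : Set (Stmt × Stmt)) (ThE : Stmt × Stmt → Set Theme)
    (isAtt isSup : Stmt × Stmt → Prop)
    (I : Set Theme → Stmt → Set D)
    (hwf : ∀ r ∈ Rel, (ThE r).Nonempty)
    (das : ∀ s' s, (s', s) ∈ Rel → ∀ T : Set Theme, T.Nonempty → T ⊆ ThE (s', s) →
      (isAtt (s', s) →
        ¬ sInf (I T s') ≤ sInf (I T s) ∧ ¬ sInf (I T s) ≤ sInf (I T s')) ∧
      (isSup (s', s) → sInf (I T s') = sInf (I T s))) :
    ∀ s₁ s₂, (s₁, s₂) ∈ Rel → isAtt (s₁, s₂) →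
      (¬ isSup (s₁, s₂)) ∧
      (∀ s : Stmt,
        ¬ ((s, s₁) ∈ Rel ∧ isSup (s, s₁) ∧ (s, s₂) ∈ Rel ∧ isSup (s, s₂) ∧
          ∃ t, t ∈ ThE (s, s₁) ∧ t ∈ ThE (s, s₂) ∧ t ∈ ThE (s₁, s₂))) := by
  have das_theme : ∀ s' s t, (s', s) ∈ Rel → t ∈ ThE (s', s) →
      (isAtt (s', s) → sInf (I {t} s') ≠ sInf (I {t} s)) ∧
      (isSup (s', s) → sInf (I {t} s') = sInf (I {t} s)) := fun s' s t hr ht =>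
    have h := das s' s hr {t} (singleton_nonempty t) (singleton_subset_iff.mpr ht)
    ⟨fun hatt => ne_of_not_le (h.1 hatt).1, h.2⟩
  intro s₁ s₂ hr hatt
  refine ⟨fun hsup => ?_, ?_⟩
  · obtain ⟨t, ht⟩ := hwf _ hr
    exact (das_theme _ _ t hr ht).1 hatt ((das_theme _ _ t hr ht).2 hsup)
  · rintro s ⟨hr₁, hsup₁, hr₂, hsup₂, t, ht₁, ht₂, ht⟩
    have h₁ := (das_theme _ _ t hr₁ ht₁).2 hsup₁
    have h₂ := (das_theme _ _ t hr₂ ht₂).2 hsup₂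
    exact (das_theme _ _ t hr ht).1 hatt (h₁.symm.trans h₂)

/-- Consequence of `das` (with `aass`): an `attack` edge is never also a
`support` edge; and no statement can support, for a shared theme, both
endpoints of an attack edge. Effective aspects are infima `sInf (I T s)` in a
complete Boolean algebra `D`; every edge is typed with at least one theme. -/
theorem stmt11 {Theme Stmt D : Type*} [CompleteBooleanAlgebra D]
    (Rel : Set (Stmt × Stmt)) (ThE : Stmt × Stmt → Set Theme)
    (isAtt isSup : Stmt × Stmt → Prop)
    (I : Set Theme → Stmt → Set D)
    (hwf : ∀ r ∈ Rel, (ThE r).Nonempty)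
    (aass : ∀ s' s, (s', s) ∈ Rel → ∀ T : Set Theme, T.Nonempty → T ⊆ ThE (s', s) →
      (isAtt (s', s) →
        (I T s').Nonempty ∧ (I T s).Nonempty ∧ sInf (I T s') ≠ sInf (I T s)) ∧
      (isSup (s', s) →
        sInf (I T s') ≤ sInf (I T s) ∨ sInf (I T s) ≤ sInf (I T s')))
    (das : ∀ s' s, (s', s) ∈ Rel → ∀ T : Set Theme, T.Nonempty → T ⊆ ThE (s', s) →
      (isAtt (s', s) →
        ¬ sInf (I T s') ≤ sInf (I T s) ∧ ¬ sInf (I T s) ≤ sInf (I T s')) ∧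
      (isSup (s', s) → sInf (I T s') = sInf (I T s))) :
    ∀ s₁ s₂, (s₁, s₂) ∈ Rel → isAtt (s₁, s₂) →
      (¬ isSup (s₁, s₂)) ∧
      (∀ s : Stmt,
        ¬ ((s, s₁) ∈ Rel ∧ isSup (s, s₁) ∧ (s, s₂) ∈ Rel ∧ isSup (s, s₂) ∧
          ∃ t, t ∈ ThE (s, s₁) ∧ t ∈ ThE (s, s₂) ∧ t ∈ ThE (s₁, s₂))) :=
  stmt11_general Rel ThE isAtt isSup I hwf das
end

section
/- There exists a typed graph (G, Π) violating the theme relevance constraint tr such that for every complete Boolean algebra D and every interpretation I, the model ⟨(G, Π), D, I⟩ fails to simultaneously satisfy the constraints pr, vi and aass. -/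
/-- Theme relevance: every edge has a theme typing the edge and both its
endpoints. -/
def TrC {Theme Stmt : Type*} (Rel : Set (Stmt × Stmt))
    (ThE : Stmt × Stmt → Set Theme) (ThS : Stmt → Set Theme) : Prop :=
  ∀ r ∈ Rel, ∃ t, t ∈ ThE r ∧ t ∈ ThS r.1 ∧ t ∈ ThS r.2

/-- Proper range (for ordinary statements). -/
def PrC {Theme Stmt D : Type*} (ThS : Stmt → Set Theme)
    (I : Set Theme → Stmt → Set D) : Prop :=
  ∀ (T : Set Theme) (a : Stmt), I T a ⊆ I (T ∩ ThS a) a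

/-- Vacuous interpretation. -/
def ViC {Theme Stmt D : Type*} (I : Set Theme → Stmt → Set D) : Prop :=
  ∀ a : Stmt, I ∅ a = ∅

/-- The attack half of `aass`. -/
def AassC {Theme Stmt D : Type*} [CompleteBooleanAlgebra D]
    (Rel : Set (Stmt × Stmt)) (ThE : Stmt × Stmt → Set Theme)
    (isAtt : Stmt × Stmt → Prop) (I : Set Theme → Stmt → Set D) : Prop :=
  ∀ s' s, (s', s) ∈ Rel → isAtt (s', s) →
    ∀ T : Set Theme, T.Nonempty → T ⊆ ThE (s', s) →
      (I T s').Nonempty ∧ (I T s).Nonempty ∧ sInf (I T s') ≠ sInf (I T s)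

/-!
Under `pr` and `vi`, `I(T, a) = ∅` as soon as `T` misses the themes of `a`; hence `aass` forces
every theme of an attack edge to be a theme of both endpoints. An attack edge whose theme is
irrelevant to its endpoints, which already violates `tr`, therefore admits no model.
-/

section

variable {Theme Stmt D : Type*} {ThS : Stmt → Set Theme} {I : Set Theme → Stmt → Set D}

theorem PrC.eq_empty_of_disjoint (hpr : PrC ThS I) (hvi : ViC I) {T : Set Theme} {a : Stmt}
    (hT : Disjoint T (ThS a)) : I T a = ∅ :=
  Set.subset_eq_empty (hpr T a) (by rw [hT.inter_eq, hvi])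

theorem AassC.mem_thS_of_mem_thE [CompleteBooleanAlgebra D] {Rel : Set (Stmt × Stmt)}
    {ThE : Stmt × Stmt → Set Theme} {isAtt : Stmt × Stmt → Prop}
    (haass : AassC Rel ThE isAtt I) (hpr : PrC ThS I) (hvi : ViC I) {s' s : Stmt} {t : Theme}
    (hr : (s', s) ∈ Rel) (hatt : isAtt (s', s)) (ht : t ∈ ThE (s', s)) :
    t ∈ ThS s' ∧ t ∈ ThS s := by
  obtain ⟨hne', hne, -⟩ :=
    haass s' s hr hatt {t} (Set.singleton_nonempty t) (Set.singleton_subset_iff.2 ht)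
  have mem_of_nonempty : ∀ a, (I {t} a).Nonempty → t ∈ ThS a := fun a ha => by
    by_contra h
    exact ha.ne_empty (hpr.eq_empty_of_disjoint hvi (Set.disjoint_singleton_left.2 h))
  exact ⟨mem_of_nonempty s' hne', mem_of_nonempty s hne⟩

end

/-- There is a typed graph (two ordinary statements, themes drawn from `ℕ`)
violating `tr` such that, for every complete Boolean algebra `D` and every
interpretation `I`, the resulting model fails to satisfy `pr`, `vi` and
`aass` simultaneously. -/
theorem stmt19 :
    ∃ (Stmt : Type) (Rel : Set (Stmt × Stmt)) (ThE : Stmt × Stmt → Set ℕ)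
      (ThS : Stmt → Set ℕ) (isAtt : Stmt × Stmt → Prop),
      Rel.Nonempty ∧
      ¬ TrC Rel ThE ThS ∧
      ∀ (D : Type) (inst : CompleteBooleanAlgebra D)
        (I : Set ℕ → Stmt → Set D),
        ¬ (PrC ThS I ∧ ViC I ∧ @AassC ℕ Stmt D inst Rel ThE isAtt I) := by
  refine ⟨Bool, {(false, true)}, fun _ => {2}, fun _ => {1}, fun _ => True, ⟨_, rfl⟩, ?_, ?_⟩
  · intro htr
    obtain ⟨t, ht2, ht1, -⟩ := htr (false, true) rfl
    rw [Set.mem_singleton_iff] at ht2 ht1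
    omega
  · rintro D inst I ⟨hpr, hvi, haass⟩
    have h21 : (2 : ℕ) ∈ ({1} : Set ℕ) :=
      (haass.mem_thS_of_mem_thE hpr hvi rfl trivial (Set.mem_singleton 2)).1
    exact absurd (Set.mem_singleton_iff.1 h21) (by norm_num)
end
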